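/- Consider a solution of $\frac{dq}{d\zeta} = -2GZq$, $\frac{dG}{d\zeta} = 2G[Z(1-G)-(Z^2+1)^{3/2}q^2]$, $\frac{dZ}{d\zeta} = (3G-1-Zq^2\sqrt{Z^2+1})(Z^2+1)$ with initial data $(q_0, 1, 0)$ where $q_0 > 0$ is sufficiently large (specifically such that $e^{-\alpha(q_0)/40} \le 1/6$ where $\alpha(q_0) = q_0^2 e^{-1} - 1$). Then there exists $\zeta_1 \in (0, 1/4]$ with $Z(\zeta_1) = 0$ and $Z$ negative immediately after, i.e., the solution reaches $Z = 0$ again within time $9/40$ after entering $\{Z > 0\}$. -/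

import Mathlib

/-!
For `ζ ≤ 1/4` the system keeps `0 < G ≤ 1` and `Z ≤ 4ζ ≤ 1`, hence `q ≥ q₀ e^{-2ζ}`, and
the `G`-equation gives `G ≤ e^{-2αζ}`. So `G ≤ 1/6` from `ζ = 1/40` on, and from then on `Z`
decreases at speed at least `1/2` while it is nonnegative: it cannot stay positive up to
`ζ = 9/40`. If instead the solution ceases to exist before `9/40` while `Z > 0`, it stays in a
compact box, has a limit and can be continued by Picard–Lindelöf, contradicting maximality.
At the first return to `Z = 0` one has `Z' = 3G - 1 ≤ 0` and `G' < 0`, so `G < 1/3` just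
afterwards, which makes `Z' < 0` wherever `Z ≥ 0`: `Z` becomes negative.
-/

/-- `(q, G, Z)` solves the reduced system (R1E2)-(R1E4) on the set `s`. -/
def EVSol (q G Z : ℝ → ℝ) (s : Set ℝ) : Prop :=
  ∀ ζ ∈ s,
    HasDerivAt q (-(2 * G ζ * Z ζ * q ζ)) ζ ∧
    HasDerivAt G (2 * G ζ * (Z ζ * (1 - G ζ)
        - Real.sqrt ((Z ζ)^2 + 1)^3 * (q ζ)^2)) ζ ∧
    HasDerivAt Z ((3 * G ζ - 1 - Z ζ * (q ζ)^2 * Real.sqrt ((Z ζ)^2 + 1))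
        * ((Z ζ)^2 + 1)) ζ

open Set Filter Topology Real

section RealCalculus

variable {f f' : ℝ → ℝ} {a b x d : ℝ}

lemma HasDerivAt.eventually_lt_right_of_neg (hf : HasDerivAt f d x) (hd : d < 0) :
    ∀ᶠ y in 𝓝[>] x, f y < f x := by
  have hslope := (hasDerivAt_iff_tendsto_slope.1 hf).eventually (gt_mem_nhds hd)
  filter_upwards [nhdsGT_le_nhdsNE x hslope, self_mem_nhdsWithin] with y hy hxy
  exact (slope_neg_iff_of_le (le_of_lt hxy)).1 hy

lemma HasDerivAt.eventually_lt_left_of_neg (hf : HasDerivAt f d x) (hd : d < 0) :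
    ∀ᶠ y in 𝓝[<] x, f x < f y := by
  have hslope := (hasDerivAt_iff_tendsto_slope.1 hf).eventually (gt_mem_nhds hd)
  filter_upwards [nhdsLT_le_nhdsNE x hslope, self_mem_nhdsWithin] with y hy hyx
  rw [slope_comm] at hy
  exact (slope_neg_iff_of_le (le_of_lt hyx)).1 hy

lemma le_of_hasDerivAt_lt_of_eq {B B' : ℝ → ℝ} (hf : ∀ x ∈ Ico a b, HasDerivAt f (f' x) x)
    (hB : ∀ x ∈ Ico a b, HasDerivAt B (B' x) x) (ha : f a ≤ B a)
    (bound : ∀ x ∈ Ico a b, f x = B x → f' x < B' x) : ∀ x ∈ Ico a b, f x ≤ B x := by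
  intro x hx
  have sub : Icc a x ⊆ Ico a b := Icc_subset_Ico_right hx.2
  exact image_le_of_deriv_right_lt_deriv_boundary'
    (fun t ht => (hf t (sub ht)).continuousAt.continuousWithinAt)
    (fun t ht => (hf t (sub (Ico_subset_Icc_self ht))).hasDerivWithinAt) ha
    (fun t ht => (hB t (sub ht)).continuousAt.continuousWithinAt)
    (fun t ht => (hB t (sub (Ico_subset_Icc_self ht))).hasDerivWithinAt)
    (fun t ht => bound t (sub (Ico_subset_Icc_self ht))) ⟨hx.1, le_rfl⟩

lemma le_mul_exp_of_hasDerivAt_le {K : ℝ} (hf : ∀ x ∈ Ico a b, HasDerivAt f (f' x) x)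
    (bound : ∀ x ∈ Ico a b, f' x ≤ K * f x) :
    ∀ x ∈ Ico a b, f x ≤ f a * exp (K * (x - a)) := by
  intro x hx
  have sub : Icc a x ⊆ Ico a b := Icc_subset_Ico_right hx.2
  have := le_gronwallBound_of_liminf_deriv_right_le (ε := 0)
    (fun t ht => (hf t (sub ht)).continuousAt.continuousWithinAt)
    (fun t ht _ hr =>
      (hf t (sub (Ico_subset_Icc_self ht))).hasDerivWithinAt.liminf_right_slope_le hr)
    le_rfl (fun t ht => by simpa using bound t (sub (Ico_subset_Icc_self ht))) x ⟨hx.1, le_rfl⟩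
  rwa [gronwallBound_ε0] at this

lemma pos_of_hasDerivAt_eq_mul {c : ℝ → ℝ} (hc : ContinuousOn c (Ico a b))
    (hf : ∀ x ∈ Ico a b, HasDerivAt f (c x * f x) x) (ha : 0 < f a) :
    ∀ x ∈ Ico a b, 0 < f x := by
  intro x hx
  obtain ⟨x', hxx', hx'b⟩ := exists_between hx.2
  have sub : Ico a x' ⊆ Ico a b := Ico_subset_Ico_right hx'b.le
  obtain ⟨M, hM⟩ :=
    isCompact_Icc.exists_bound_of_continuousOn (hc.mono (Icc_subset_Ico_right hx'b))
  -- as `|c| ≤ M`, `f` cannot meet the faster decaying barrier `f a / 2 * e^{-(M+1)(t-a)}`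
  have key := le_of_hasDerivAt_lt_of_eq (f := fun t => -f t)
    (B := fun t => -(f a / 2 * exp (-(M + 1) * (t - a))))
    (fun t ht => (hf t (sub ht)).neg)
    (fun t _ =>
      (((hasDerivAt_id t).sub_const a).const_mul (-(M + 1))).exp.const_mul (f a / 2) |>.neg)
    (by simp only [sub_self, mul_zero, exp_zero, mul_one, neg_le_neg_iff]; linarith)
    (fun t ht heq => by
      have hct := hM t (Ico_subset_Icc_self ht)
      rw [Real.norm_eq_abs, abs_le] at hct
      have hft : f t = f a / 2 * exp (-(M + 1) * (t - a)) := by simpa using heq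
      have hpos : 0 < f t := hft ▸ by positivity
      simp only [id, mul_one]
      nlinarith)
    x ⟨hx.1, hxx'⟩
  have : 0 < f a / 2 * exp (-(M + 1) * (x - a)) := by positivity
  simp only [neg_le_neg_iff] at key
  linarith

lemma neg_of_hasDerivAt_neg_of_nonneg (ha : f a ≤ 0)
    (hf : ∀ x ∈ Ico a b, HasDerivAt f (f' x) x) (hneg : ∀ x ∈ Ioo a b, 0 ≤ f x → f' x < 0) :
    ∀ x ∈ Ioo a b, f x < 0 := by
  intro x hx
  by_contra! hfx
  have hcont : ContinuousOn f (Icc a x) := fun t ht =>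
    (hf t ⟨ht.1, ht.2.trans_lt hx.2⟩).continuousAt.continuousWithinAt
  obtain ⟨c, hc, hmax⟩ := isCompact_Icc.exists_isMaxOn (nonempty_Icc.2 hx.1.le) hcont
  obtain ⟨c, ⟨hac, hcx⟩, hmax⟩ : ∃ c ∈ Ioc a x, IsMaxOn f (Icc a x) c := by
    rcases hc.1.eq_or_lt with rfl | h
    · exact ⟨x, ⟨hx.1, le_rfl⟩, fun y hy => (hmax hy).trans (ha.trans hfx)⟩
    · exact ⟨c, ⟨h, hc.2⟩, hmax⟩
  have hcb : c ∈ Ioo a b := ⟨hac, hcx.trans_lt hx.2⟩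
  have hfc : 0 ≤ f c := hfx.trans (hmax ⟨hx.1.le, le_rfl⟩)
  obtain ⟨y, hy, hya⟩ := ((hf c ⟨hac.le, hcb.2⟩).eventually_lt_left_of_neg
    (hneg c hcb hfc) |>.and (Ioo_mem_nhdsLT hac)).exists
  exact (hmax ⟨hya.1.le, hya.2.le.trans hcx⟩ : f y ≤ f c).not_gt hy

lemma exists_first_zero (hab : a < b) (hf : ContinuousOn f (Ioc a b))
    (hpos : ∀ᶠ x in 𝓝[>] a, 0 < f x) (hb : f b ≤ 0) :
    ∃ c ∈ Ioc a b, f c = 0 ∧ ∀ x ∈ Ioo a c, 0 < f x := by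
  obtain ⟨δ, hδ, hδpos⟩ := mem_nhdsGT_iff_exists_Ioo_subset.1 hpos
  obtain ⟨d, had, hdδ⟩ := exists_between (mem_Ioi.1 hδ)
  have hfd : 0 < f d := hδpos ⟨had, hdδ⟩
  have hdb : d ≤ b := by
    by_contra! h
    exact (hδpos ⟨hab, h.trans hdδ⟩ : 0 < f b).not_ge hb
  have hcont : ContinuousOn f (Icc d b) := hf.mono (Icc_subset_Ioc_iff hdb |>.2 ⟨had, le_rfl⟩)
  set S := Icc d b ∩ f ⁻¹' Iic 0
  have hS : IsClosed S := hcont.preimage_isClosed_of_isClosed isClosed_Icc isClosed_Iic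
  have hSb : b ∈ S := ⟨⟨hdb, le_rfl⟩, hb⟩
  have hSbdd : BddBelow S := ⟨d, fun x hx => hx.1.1⟩
  have hcS : sInf S ∈ S := hS.csInf_mem ⟨b, hSb⟩ hSbdd
  have hbelow : ∀ x ∈ Icc d b, x < sInf S → 0 < f x := fun x hx hxc => by
    by_contra! h
    exact (csInf_le hSbdd ⟨hx, h⟩).not_gt hxc
  refine ⟨sInf S, ⟨had.trans_le hcS.1.1, hcS.1.2⟩, ?_, fun x hx => ?_⟩
  · obtain ⟨y, hy, hfy⟩ := intermediate_value_Icc' hcS.1.1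
      (hcont.mono (Icc_subset_Icc_right hcS.1.2)) ⟨hcS.2, hfd.le⟩
    have hyS : y ∈ S := ⟨⟨hy.1, hy.2.trans hcS.1.2⟩, hfy.le⟩
    rwa [le_antisymm hy.2 (csInf_le hSbdd hyS)] at hfy
  · rcases lt_or_ge x d with h | h
    · exact hδpos ⟨hx.1, h.trans hdδ⟩
    · exact hbelow x ⟨h, hx.2.le.trans hcS.1.2⟩ hx.2

end RealCalculus

section Continuation

variable {E : Type*} [NormedAddCommGroup E] [NormedSpace ℝ E]
  {F : E → E} {u : ℝ → E} {a T : ℝ}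

lemma exists_tendsto_nhdsLT_of_mem_compact [CompleteSpace E] (hF : Continuous F) {K : Set E}
    (hK : IsCompact K) (haT : a < T) (hu : ∀ t ∈ Ico a T, HasDerivAt u (F (u t)) t)
    (huK : ∀ t ∈ Ico a T, u t ∈ K) : ∃ x₀, Tendsto u (𝓝[<] T) (𝓝 x₀) := by
  obtain ⟨C, hC⟩ := hK.exists_bound_of_continuousOn hF.continuousOn
  have hlip : LipschitzOnWith C.toNNReal u (Ico a T) :=
    (convex_Ico a T).lipschitzOnWith_of_nnnorm_hasDerivWithin_le
      (fun t ht => (hu t ht).hasDerivWithinAt) fun t ht => by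
        rw [← NNReal.coe_le_coe, coe_nnnorm]
        exact (hC _ (huK t ht)).trans (le_coe_toNNReal C)
  have : (𝓝[Ico a T] T).NeBot := by
    rw [nhdsWithin_Ico_eq_nhdsLT haT]; infer_instance
  have hcauchy : Cauchy (map u (𝓝[Ico a T] T)) :=
    (cauchy_nhds.mono nhdsWithin_le_nhds).map_of_le hlip.uniformContinuousOn inf_le_right
  rw [← nhdsWithin_Ico_eq_nhdsLT haT]
  exact cauchy_map_iff_exists_tendsto.1 hcauchy

lemma hasDerivAt_ite_of_tendsto (hF : Continuous F) {y : ℝ → E} {ε : ℝ} (haT : a < T)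
    (hε : 0 < ε) (hu : ∀ t ∈ Ico a T, HasDerivAt u (F (u t)) t)
    (hlim : Tendsto u (𝓝[<] T) (𝓝 (y T)))
    (hy : ∀ t ∈ Ioo (T - ε) (T + ε), HasDerivAt y (F (y t)) t) :
    ∀ t ∈ Ico a (T + ε), HasDerivAt (fun s => if s < T then u s else y s)
      (F (if t < T then u t else y t)) t := by
  set v := fun s => if s < T then u s else y s
  have hvu : EqOn v u (Iio T) := fun s hs => if_pos hs
  have hvy : EqOn v y (Ici T) := fun s hs => if_neg (not_lt.2 hs)
  have hleft : ∀ t ∈ Ico a T, HasDerivAt v (F (u t)) t := fun t ht =>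
    (hu t ht).congr_of_eventuallyEq (eventuallyEq_of_mem (Iio_mem_nhds ht.2) hvu)
  intro t ht
  rcases lt_trichotomy t T with htT | rfl | htT
  · rw [if_pos htT]
    exact hleft t ⟨ht.1, htT⟩
  · rw [if_neg (lt_irrefl t)]
    have hvlim : Tendsto v (𝓝[<] t) (𝓝 (y t)) :=
      hlim.congr' (eventuallyEq_of_mem self_mem_nhdsWithin fun s hs => (hvu hs).symm)
    have hderiv_lim : Tendsto (deriv v) (𝓝[<] t) (𝓝 (F (y t))) :=
      ((hF.tendsto _).comp hlim).congr' (eventuallyEq_of_mem (Ioo_mem_nhdsLT haT)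
        fun s hs => (hleft s (Ioo_subset_Ico_self hs)).deriv.symm)
    have hIic : HasDerivWithinAt v (F (y t)) (Iic t) t :=
      hasDerivWithinAt_Iic_of_tendsto_deriv
        (fun s hs => (hleft s (Ioo_subset_Ico_self hs)).differentiableAt.differentiableWithinAt)
        (by
          rw [ContinuousWithinAt, nhdsWithin_Ioo_eq_nhdsLT haT]
          exact (hvy self_mem_Ici).symm ▸ hvlim)
        (Ioo_mem_nhdsLT haT) hderiv_lim
    have hIci : HasDerivWithinAt v (F (y t)) (Ici t) t :=
      (hy t ⟨by linarith, by linarith⟩).hasDerivWithinAt.congr (fun s hs => hvy hs)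
        (hvy self_mem_Ici)
    simpa [Iic_union_Ici, hasDerivWithinAt_univ] using hIic.union hIci
  · rw [if_neg (not_lt.2 htT.le)]
    exact (hy t ⟨by linarith, ht.2⟩).congr_of_eventuallyEq
      (eventuallyEq_of_mem (Ici_mem_nhds htT) hvy)

theorem exists_extension_of_mem_compact [CompleteSpace E] (hF : ContDiff ℝ 1 F) {K : Set E}
    (hK : IsCompact K) (haT : a < T) (hu : ∀ t ∈ Ico a T, HasDerivAt u (F (u t)) t)
    (huK : ∀ t ∈ Ico a T, u t ∈ K) :
    ∃ T' > T, ∃ v : ℝ → E,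
      (∀ t ∈ Ico a T', HasDerivAt v (F (v t)) t) ∧ EqOn v u (Ico a T) := by
  obtain ⟨x₀, hx₀⟩ := exists_tendsto_nhdsLT_of_mem_compact hF.continuous hK haT hu huK
  obtain ⟨y, hy₀, ε, hε, hy⟩ :=
    (hF.contDiffAt (x := x₀)).exists_forall_mem_closedBall_exists_eq_forall_mem_Ioo_hasDerivAt₀ T
  exact ⟨T + ε, by linarith, _,
    hasDerivAt_ite_of_tendsto hF.continuous haT hε hu (hy₀ ▸ hx₀) hy, fun t ht => if_pos ht.2⟩

end Continuation

lemma hasDerivAt_prodMk_iff {E F : Type*} [NormedAddCommGroup E] [NormedSpace ℝ E]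
    [NormedAddCommGroup F] [NormedSpace ℝ F] {f : ℝ → E} {g : ℝ → F} {e : E} {e' : F} {t : ℝ} :
    HasDerivAt (fun s => (f s, g s)) (e, e') t ↔ HasDerivAt f e t ∧ HasDerivAt g e' t :=
  ⟨fun h => ⟨(ContinuousLinearMap.fst ℝ E F).hasFDerivAt.comp_hasDerivAt t h,
      (ContinuousLinearMap.snd ℝ E F).hasFDerivAt.comp_hasDerivAt t h⟩,
    fun h => h.1.prodMk h.2⟩

/-- The vector field of `EVSol` in the coordinates `x = (q, G, Z)`. -/
noncomputable def evField (x : ℝ × ℝ × ℝ) : ℝ × ℝ × ℝ :=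
  (-(2 * x.2.1 * x.2.2 * x.1),
    2 * x.2.1 * (x.2.2 * (1 - x.2.1) - √(x.2.2 ^ 2 + 1) ^ 3 * x.1 ^ 2),
    (3 * x.2.1 - 1 - x.2.2 * x.1 ^ 2 * √(x.2.2 ^ 2 + 1)) * (x.2.2 ^ 2 + 1))

lemma contDiff_evField : ContDiff ℝ 1 evField := by
  have hsqrt : ContDiff ℝ 1 fun x : ℝ × ℝ × ℝ => √(x.2.2 ^ 2 + 1) :=
    (contDiff_snd.snd.pow 2 |>.add contDiff_const).sqrt fun x => by positivity
  unfold evField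
  fun_prop

lemma evSol_iff {q G Z : ℝ → ℝ} {s : Set ℝ} :
    EVSol q G Z s ↔
      ∀ t ∈ s, HasDerivAt (fun t => (q t, G t, Z t)) (evField (q t, G t, Z t)) t := by
  simp only [EVSol, evField, hasDerivAt_prodMk_iff]

namespace EVSol

variable {q G Z : ℝ → ℝ} {s : Set ℝ} {T : ℝ}

lemma mono {s' : Set ℝ} (hsol : EVSol q G Z s) (hs : s' ⊆ s) : EVSol q G Z s' :=
  fun t ht => hsol t (hs ht)

lemma continuousOn (hsol : EVSol q G Z s) :
    ContinuousOn q s ∧ ContinuousOn G s ∧ ContinuousOn Z s :=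
  ⟨fun t ht => (hsol t ht).1.continuousAt.continuousWithinAt,
    fun t ht => (hsol t ht).2.1.continuousAt.continuousWithinAt,
    fun t ht => (hsol t ht).2.2.continuousAt.continuousWithinAt⟩

lemma q_pos (hsol : EVSol q G Z (Ico 0 T)) (hq : 0 < q 0) : ∀ t ∈ Ico 0 T, 0 < q t := by
  obtain ⟨-, hGc, hZc⟩ := hsol.continuousOn
  refine pos_of_hasDerivAt_eq_mul (c := fun t => -(2 * G t * Z t)) (by fun_prop)
    (fun t ht => ?_) hq
  convert (hsol t ht).1 using 1
  ring

lemma G_pos (hsol : EVSol q G Z (Ico 0 T)) (hG : 0 < G 0) : ∀ t ∈ Ico 0 T, 0 < G t := by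
  obtain ⟨hqc, hGc, hZc⟩ := hsol.continuousOn
  refine pos_of_hasDerivAt_eq_mul
    (c := fun t => 2 * (Z t * (1 - G t) - √(Z t ^ 2 + 1) ^ 3 * q t ^ 2)) (by fun_prop)
    (fun t ht => ?_) hG
  convert (hsol t ht).2.1 using 1
  ring

lemma G_le_one (hsol : EVSol q G Z (Ico 0 T)) (hq : 0 < q 0) (hG : G 0 ≤ 1) :
    ∀ t ∈ Ico 0 T, G t ≤ 1 := by
  refine le_of_hasDerivAt_lt_of_eq (fun t ht => (hsol t ht).2.1)
    (fun t _ => hasDerivAt_const t 1) hG fun t ht hGt => ?_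
  have : 0 < √(Z t ^ 2 + 1) ^ 3 * q t ^ 2 := by
    have := hsol.q_pos hq t ht
    positivity
  rw [hGt]
  linarith

lemma Z_le_four_mul (hsol : EVSol q G Z (Ico 0 T)) (hT : T ≤ 1 / 4)
    (hG : ∀ t ∈ Ico 0 T, G t ≤ 1) (hZ : Z 0 ≤ 0) : ∀ t ∈ Ico 0 T, Z t ≤ 4 * t := by
  refine le_of_hasDerivAt_lt_of_eq (fun t ht => (hsol t ht).2.2)
    (fun t _ => (hasDerivAt_id t).const_mul 4) (by simpa using hZ) fun t ht hZt => ?_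
  -- on the barrier `0 ≤ Z < 1`, so the speed is below `2 * (Z ^ 2 + 1) < 4`
  have hZ0 : 0 ≤ Z t := by rw [hZt]; linarith [ht.1]
  have hZ1 : Z t < 1 := by rw [hZt]; linarith [ht.2]
  have hloss : 0 ≤ Z t * q t ^ 2 * √(Z t ^ 2 + 1) := by positivity
  have hG1 := hG t ht
  simp only [mul_one]
  rcases le_or_gt (3 * G t - 1 - Z t * q t ^ 2 * √(Z t ^ 2 + 1)) 0 with h | h
  · nlinarith
  · nlinarith

lemma q_ge (hsol : EVSol q G Z (Ico 0 T)) (hT : T ≤ 1 / 4) (hq : 0 < q 0) (hG : G 0 = 1)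
    (hZ : Z 0 = 0) : ∀ t ∈ Ico 0 T, q 0 * exp (-(2 * t)) ≤ q t := by
  have hG1 := hsol.G_le_one hq hG.le
  have hZ4 := hsol.Z_le_four_mul hT hG1 hZ.le
  have key := le_mul_exp_of_hasDerivAt_le (f := fun t => -q t) (K := -2)
    (fun t ht => (hsol t ht).1.neg) fun t ht => by
    have hqt := hsol.q_pos hq t ht
    have hGt := hsol.G_pos (hG ▸ one_pos) t ht
    have hZt : Z t ≤ 1 := by linarith [hZ4 t ht, ht.2]
    have hGZ : G t * Z t ≤ 1 := by
      rcases le_or_gt 0 (Z t) with h | h <;> nlinarith [hG1 t ht]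
    nlinarith
  intro t ht
  simpa using key t ht

lemma sq_q_ge (hsol : EVSol q G Z (Ico 0 T)) (hT : T ≤ 1 / 4) (hq : 0 < q 0) (hG : G 0 = 1)
    (hZ : Z 0 = 0) : ∀ t ∈ Ico 0 T, q 0 ^ 2 * exp (-1) ≤ q t ^ 2 := by
  intro t ht
  have hexp : exp (-1) ≤ exp (-(2 * t)) ^ 2 := by
    rw [sq, ← exp_add]
    exact exp_le_exp.2 (by linarith [ht.2])
  calc q 0 ^ 2 * exp (-1) ≤ (q 0 * exp (-(2 * t))) ^ 2 := by
        rw [mul_pow]; gcongr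
    _ ≤ q t ^ 2 := pow_le_pow_left₀ (by positivity) (hsol.q_ge hT hq hG hZ t ht) 2

lemma G_le_exp (hsol : EVSol q G Z (Ico 0 T)) (hT : T ≤ 1 / 4) (hq : 0 < q 0) (hG : G 0 = 1)
    (hZ : Z 0 = 0) : ∀ t ∈ Ico 0 T, G t ≤ exp (-(2 * (q 0 ^ 2 * exp (-1) - 1) * t)) := by
  have key := le_mul_exp_of_hasDerivAt_le (K := -(2 * (q 0 ^ 2 * exp (-1) - 1)))
    (fun t ht => (hsol t ht).2.1) fun t ht => by
    have hGt := hsol.G_pos (hG ▸ one_pos) t ht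
    have hG1 := hsol.G_le_one hq hG.le t ht
    have hZt : Z t ≤ 1 := by
      linarith [hsol.Z_le_four_mul hT (hsol.G_le_one hq hG.le) hZ.le t ht, ht.2]
    have hq2 := hsol.sq_q_ge hT hq hG hZ t ht
    have hw : 1 ≤ √(Z t ^ 2 + 1) ^ 3 := one_le_pow₀ (one_le_sqrt.2 (by nlinarith))
    have hZG : Z t * (1 - G t) ≤ 1 := by
      rcases le_or_gt 0 (Z t) with h | h <;> nlinarith
    have hbracket :
        Z t * (1 - G t) - √(Z t ^ 2 + 1) ^ 3 * q t ^ 2 ≤ 1 - q 0 ^ 2 * exp (-1) := by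
      nlinarith [mul_le_mul_of_nonneg_right hw (sq_nonneg (q t))]
    nlinarith
  intro t ht
  simpa [hG] using key t ht

lemma exists_Z_nonpos (hsol : EVSol q G Z (Ico 0 T)) (hT : 9 / 40 < T) (hq : 0 < q 0)
    (hG : G 0 = 1) (hZ : Z 0 = 0) (hlarge : exp (-((q 0 ^ 2 * exp (-1) - 1) / 40)) ≤ 1 / 6) :
    ∃ t ∈ Icc (1 / 40 : ℝ) (9 / 40), Z t ≤ 0 := by
  by_contra! hZpos
  have hT' : 9 / 40 < min T (1 / 4) := lt_min hT (by norm_num)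
  have hsol' := hsol.mono (Ico_subset_Ico_right (min_le_left T (1 / 4)))
  have hmem : Icc (1 / 40 : ℝ) (9 / 40) ⊆ Ico 0 (min T (1 / 4)) := fun t ht =>
    ⟨by linarith [ht.1], ht.2.trans_lt hT'⟩
  have hα : 0 < q 0 ^ 2 * exp (-1) - 1 := by
    have := hlarge.trans_lt (by norm_num : (1 : ℝ) / 6 < 1)
    rw [exp_lt_one_iff] at this
    linarith
  have hG6 : ∀ t ∈ Icc (1 / 40 : ℝ) (9 / 40), G t ≤ 1 / 6 := fun t ht => by
    refine (hsol'.G_le_exp (min_le_right _ _) hq hG hZ t (hmem ht)).trans (le_trans ?_ hlarge)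
    exact exp_le_exp.2 (by nlinarith [ht.1])
  -- there `Z' ≤ -1/2` while `Z ≥ 0`, so `Z` drops by `1/10` across `[1/40, 9/40]`
  have hZ9 := image_le_of_deriv_right_le_deriv_boundary (a := 1 / 40) (b := 9 / 40) (f := Z)
    (B := fun t => Z (1 / 40) - (t - 1 / 40) / 2) (B' := fun _ => -(1 / 2))
    (fun t ht => (hsol' t (hmem ht)).2.2.continuousAt.continuousWithinAt)
    (fun t ht => (hsol' t (hmem (Ico_subset_Icc_self ht))).2.2.hasDerivWithinAt) (by simp)
    (by fun_prop)
    (fun t _ => (((hasDerivAt_id t).sub_const _).div_const 2).const_sub _ |>.hasDerivWithinAt)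
    (fun t ht => by
      have hZt := hZpos t (Ico_subset_Icc_self ht)
      have hGt := hG6 t (Ico_subset_Icc_self ht)
      have hloss : 0 ≤ Z t * q t ^ 2 * √(Z t ^ 2 + 1) := by positivity
      nlinarith)
    (right_mem_Icc.2 (by norm_num))
  have hZ1 := hsol'.Z_le_four_mul (min_le_right _ _) (hsol'.G_le_one hq hG.le) hZ.le (1 / 40)
    (hmem (left_mem_Icc.2 (by norm_num)))
  linarith [hZpos (9 / 40) (right_mem_Icc.2 (by norm_num))]

lemma eventually_Z_pos (hsol : EVSol q G Z (Ico 0 T)) (hT : 0 < T) (hG : 1 < 3 * G 0)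
    (hZ : Z 0 = 0) : ∀ᶠ t in 𝓝[>] 0, 0 < Z t := by
  have hd : HasDerivAt Z (3 * G 0 - 1) 0 := by
    simpa [hZ] using (hsol 0 ⟨le_rfl, hT⟩).2.2
  filter_upwards [hd.neg.eventually_lt_right_of_neg (by linarith)] with t ht
  simpa [hZ] using ht

lemma exists_Z_neg_right (hsol : EVSol q G Z (Ico 0 T)) (hq : 0 < q 0) (hG : 0 < G 0)
    {ζ₁ : ℝ} (hζ₁ : ζ₁ ∈ Ioo 0 T) (hZζ₁ : Z ζ₁ = 0) (hpos : ∀ t ∈ Ioo 0 ζ₁, 0 < Z t) :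
    ∃ ε > 0, ∀ t ∈ Ioo ζ₁ (ζ₁ + ε), Z t < 0 := by
  have hmem : ζ₁ ∈ Ico 0 T := Ioo_subset_Ico_self hζ₁
  have hdZ : HasDerivAt Z (3 * G ζ₁ - 1) ζ₁ := by
    simpa [hZζ₁] using (hsol ζ₁ hmem).2.2
  have hdG : HasDerivAt G (-(2 * G ζ₁ * q ζ₁ ^ 2)) ζ₁ := by
    convert (hsol ζ₁ hmem).2.1 using 1
    simp [hZζ₁]
  have hG3 : 3 * G ζ₁ - 1 ≤ 0 := by
    by_contra! h
    obtain ⟨t, ht, htmem⟩ :=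
      (hdZ.neg.eventually_lt_left_of_neg (by linarith) |>.and (Ioo_mem_nhdsLT hζ₁.1)).exists
    simp only [Pi.neg_apply, hZζ₁, neg_zero, neg_pos] at ht
    exact (hpos t htmem).not_gt ht
  have hGneg : -(2 * G ζ₁ * q ζ₁ ^ 2) < 0 := by
    have := hsol.q_pos hq ζ₁ hmem
    have := hsol.G_pos hG ζ₁ hmem
    simp only [neg_lt_zero]
    positivity
  obtain ⟨b, hb, hGb⟩ :=
    mem_nhdsGT_iff_exists_Ioo_subset.1 (hdG.eventually_lt_right_of_neg hGneg)
  refine ⟨min b T - ζ₁, sub_pos.2 (lt_min hb hζ₁.2), fun t ht => ?_⟩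
  refine neg_of_hasDerivAt_neg_of_nonneg hZζ₁.le
    (fun x hx => (hsol x ⟨hζ₁.1.le.trans hx.1, hx.2.trans_le (min_le_right _ _)⟩).2.2)
    (fun x hx hZx => ?_) t ⟨ht.1, by linarith [ht.2]⟩
  have hGx : G x < G ζ₁ := hGb ⟨hx.1, hx.2.trans_le (min_le_left _ _)⟩
  have hloss : 0 ≤ Z x * q x ^ 2 * √(Z x ^ 2 + 1) := by positivity
  exact mul_neg_of_neg_of_pos (by linarith) (by positivity)

lemma exists_extension (hsol : EVSol q G Z (Ico 0 T)) (hT₀ : 0 < T) (hT : T ≤ 1 / 4)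
    (hq : 0 < q 0) (hG : G 0 = 1) (hZ₀ : Z 0 = 0) (hZ : ∀ t ∈ Ico 0 T, 0 ≤ Z t) :
    ∃ T' > T, ∃ q' G' Z' : ℝ → ℝ, EVSol q' G' Z' (Ico 0 T') ∧
      ∀ t ∈ Ico 0 T, q' t = q t ∧ G' t = G t ∧ Z' t = Z t := by
  have hq_le : ∀ t ∈ Ico 0 T, q t ≤ q 0 := by
    have key := le_mul_exp_of_hasDerivAt_le (K := 0) (fun t ht => (hsol t ht).1) fun t ht => by
      have := hsol.q_pos hq t ht
      have := hsol.G_pos (hG ▸ one_pos) t ht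
      have := hZ t ht
      simp only [zero_mul, neg_nonpos]
      positivity
    simpa using key
  have hG1 := hsol.G_le_one hq hG.le
  have hK : IsCompact (Icc 0 (q 0) ×ˢ Icc (0 : ℝ) 1 ×ˢ Icc (0 : ℝ) 1) :=
    isCompact_Icc.prod (isCompact_Icc.prod isCompact_Icc)
  obtain ⟨T', hT', v, hv, hvu⟩ := exists_extension_of_mem_compact contDiff_evField hK hT₀
    (evSol_iff.1 hsol) fun t ht =>
      ⟨⟨(hsol.q_pos hq t ht).le, hq_le t ht⟩, ⟨(hsol.G_pos (hG ▸ one_pos) t ht).le, hG1 t ht⟩,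
        ⟨hZ t ht, by linarith [hsol.Z_le_four_mul hT hG1 hZ₀.le t ht, ht.2]⟩⟩
  refine ⟨T', hT', fun t => (v t).1, fun t => (v t).2.1, fun t => (v t).2.2, evSol_iff.2 hv,
    fun t ht => ?_⟩
  simp [hvu ht]

end EVSol

/-- Shooting argument, large-`q₀` side: the maximal solution starting at
`(q₀, 1, 0)` with `q₀` large enough that `e^{-α(q₀)/40} ≤ 1/6`, where
`α(q₀) = q₀²e^{-1} - 1`, returns to `Z = 0` at some time `ζ₁ ∈ (0, 9/40]`
and `Z` is negative immediately afterwards. -/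
theorem stmt_15 (q G Z : ℝ → ℝ) (q0 ζstar : ℝ) (hq0 : 0 < q0)
    (hlarge : Real.exp (-((q0^2 * Real.exp (-1) - 1) / 40)) ≤ 1/6)
    (hζstar : 0 < ζstar)
    (hsol : EVSol q G Z (Set.Ico 0 ζstar))
    (hinit : q 0 = q0 ∧ G 0 = 1 ∧ Z 0 = 0)
    -- maximality of the interval of existence [0, ζstar)
    (hmax : ∀ (q' G' Z' : ℝ → ℝ) (T' : ℝ), ζstar < T' →
      EVSol q' G' Z' (Set.Ico 0 T') →
      (∀ ζ ∈ Set.Ico (0:ℝ) ζstar, q' ζ = q ζ ∧ G' ζ = G ζ ∧ Z' ζ = Z ζ) →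
      False) :
    ∃ ζ1 : ℝ, 0 < ζ1 ∧ ζ1 ≤ 9/40 ∧ ζ1 < ζstar ∧ Z ζ1 = 0 ∧
      ∃ ε > 0, ∀ ζ : ℝ, ζ1 < ζ → ζ < ζ1 + ε → ζ < ζstar → Z ζ < 0 := by
  obtain ⟨rfl, hG, hZ⟩ := hinit
  obtain ⟨t₀, ht₀, ht₀T, hZt₀⟩ : ∃ t₀ ∈ Ioc (0 : ℝ) (9 / 40), t₀ < ζstar ∧ Z t₀ ≤ 0 := by
    rcases lt_or_ge (9 / 40 : ℝ) ζstar with h9 | h9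
    · obtain ⟨t, ht, hZt⟩ := hsol.exists_Z_nonpos h9 hq0 hG hZ hlarge
      exact ⟨t, ⟨by linarith [ht.1], ht.2⟩, by linarith [ht.2], hZt⟩
    · by_contra! hZpos
      have hZnonneg : ∀ t ∈ Ico 0 ζstar, 0 ≤ Z t := fun t ht => by
        rcases ht.1.eq_or_lt with rfl | h
        · exact hZ.ge
        · exact (hZpos t ⟨h, by linarith [ht.2]⟩ ht.2).le
      obtain ⟨T', hT', q', G', Z', hsol', hext⟩ :=
        hsol.exists_extension hζstar (by linarith) hq0 hG hZ hZnonneg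
      exact hmax q' G' Z' T' hT' hsol' hext
  obtain ⟨ζ₁, hζ₁, hZζ₁, hpos⟩ := exists_first_zero ht₀.1
    (hsol.continuousOn.2.2.mono fun t ht => ⟨ht.1.le, ht.2.trans_lt ht₀T⟩)
    (hsol.eventually_Z_pos hζstar (by rw [hG]; norm_num) hZ) hZt₀
  obtain ⟨ε, hε, hneg⟩ :=
    hsol.exists_Z_neg_right hq0 (hG ▸ one_pos) ⟨hζ₁.1, hζ₁.2.trans_lt ht₀T⟩ hZζ₁ hpos
  exact ⟨ζ₁, hζ₁.1, hζ₁.2.trans ht₀.2, hζ₁.2.trans_lt ht₀T, hZζ₁, ε, hε,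
    fun t h₁ h₂ _ => hneg t ⟨h₁, h₂⟩⟩
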